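/- arXiv:1502.02016 — 3 statements merged into one kernel-verified Lean document; each statement's English description precedes it below -/
import Mathlib

section
/- In a right-angled Coxeter system, if u s v t w = u v w with u, v, w elements of W and s, t standard generators, and this arises from a reduced-expression cancellation (i.e. v^{-1} s v = t), then s = t and every generator appearing in a reduced expression of v commutes with s. -/
/-!
Right-angledness makes `s_b ↦ [b = c]` a homomorphism to `ZMod 2`, so conjugate generators are
equal; this gives `s = t`. For the second claim, peel off the first letter `c` of a reduced word
for `v`. Both `s_i` and `s_c` are left descents of `v` or of `s_i v`, so either `s_c` commutes with
`s_i`, or `s_i, s_c` generate an infinite dihedral group with an element having both generators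
as left descents. The latter is impossible: write the element as `d x` with `x` shortest in its
coset; lengths then add (by the exchange condition, which comes from Tits' reflection cocycle),
and the dihedral factor `d` is measured by its action on `ℤ`.
-/

def CoxeterMatrix.IsRightAngled {B : Type*} (M : CoxeterMatrix B) : Prop :=
  ∀ i j : B, i ≠ j → M i j = 2 ∨ M i j = 0

theorem CoxeterMatrix.IsRightAngled.isLiftable {B : Type*} {M : CoxeterMatrix B}
    (hM : M.IsRightAngled) {G : Type*} [Monoid G] {f : B → G} (hsq : ∀ b, f b * f b = 1)
    (hcomm : ∀ b b', M b b' = 2 → f b * f b' = f b' * f b) : M.IsLiftable f := by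
  intro b b'
  rcases eq_or_ne b b' with rfl | hbb'
  · rw [M.diagonal, pow_one, hsq]
  rcases hM b b' hbb' with h | h
  · rw [h, pow_two, mul_assoc, ← mul_assoc (f b'), ← hcomm b b' h, mul_assoc, hsq, mul_one,
      hsq]
  · rw [h, pow_zero]

namespace CoxeterSystem

open List

variable {B W : Type*} [Group W] {M : CoxeterMatrix B} (cs : CoxeterSystem M W)

local prefix:100 "s " => cs.simple
local prefix:100 "π " => cs.wordProd
local prefix:100 "ℓ " => cs.length

section ReflectionCocycle

open scoped Classical

/-- `s a` acts on subsets of `W`, encoded as indicator functions, by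
`X ↦ s_a X s_a ∆ {s_a}`. -/
noncomputable def reflRepGen (a : B) : Function.End (W → ZMod 2) :=
  fun f t => f (s a * t * s a) + if t = s a then 1 else 0

private theorem conj_eq_iff (g t x : W) : g⁻¹ * t * g = x ↔ t = g * x * g⁻¹ := by
  constructor <;> rintro rfl <;> group

theorem reflRepGen_mul_reflRepGen_apply (a b : B) (f : W → ZMod 2) (t : W) :
    (cs.reflRepGen a * cs.reflRepGen b) f t =
      f ((s a * s b)⁻¹ * t * (s a * s b)) + ((if t = s a * s b * s a then 1 else 0) +
        if t = s a then 1 else 0) := by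
  have h := conj_eq_iff (s a) t (s b)
  rw [inv_simple] at h
  show f (s b * (s a * t * s a) * s b) + (if s a * t * s a = s b then 1 else 0) +
    (if t = s a then 1 else 0) = _
  rw [h, add_assoc, mul_inv_rev, inv_simple, inv_simple]
  simp only [mul_assoc]

theorem pow_reflRepGen_mul_reflRepGen_apply (a b : B) (j : ℕ) (f : W → ZMod 2) (t : W) :
    ((cs.reflRepGen a * cs.reflRepGen b) ^ j) f t =
      f (((s a * s b) ^ j)⁻¹ * t * (s a * s b) ^ j) +
        ∑ l ∈ Finset.range (2 * j), if t = (s a * s b) ^ l * s a then 1 else 0 := by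
  obtain ⟨g, hg⟩ : ∃ g, s a * s b = g := ⟨_, rfl⟩
  have hsg : s a * s b * s a = g * s a := by rw [hg]
  have shift (l : ℕ) : g * (g ^ l * s a) * g⁻¹ = g ^ (l + 2) * s a := by
    have : s a * g⁻¹ = g * s a := by
      rw [← hg, mul_inv_rev, inv_simple, inv_simple, ← mul_assoc]
    rw [mul_assoc, mul_assoc, this, pow_succ, pow_succ']
    simp only [mul_assoc]
  rw [hg]
  induction j generalizing t with
  | zero => simp; rfl
  | succ j ih =>
    rw [pow_succ']
    show ((cs.reflRepGen a * cs.reflRepGen b)) (((cs.reflRepGen a * cs.reflRepGen b) ^ j) f) t = _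
    rw [reflRepGen_mul_reflRepGen_apply, ih, hsg, hg]
    simp only [conj_eq_iff, shift, Finset.sum_range_succ' _ (2 * j + 1),
      Finset.sum_range_succ' _ (2 * j), Nat.mul_succ]
    rw [pow_succ', mul_inv_rev]
    simp only [zero_add, pow_one, pow_zero, one_mul, mul_assoc, add_assoc]

/-- The reflections `(s_a s_b)^l s_a`, `l < 2 M a b`, repeat with period `M a b`, so each is
toggled twice. -/
theorem isLiftable_reflRepGen : M.IsLiftable cs.reflRepGen := by
  intro a b
  refine funext fun f => funext fun t => ?_
  rw [pow_reflRepGen_mul_reflRepGen_apply, simple_mul_simple_pow, inv_one, one_mul, mul_one,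
    two_mul, Finset.sum_range_add]
  simp only [pow_add, simple_mul_simple_pow, one_mul, CharTwo.add_self_eq_zero, add_zero]
  rfl

noncomputable def reflRep : W →* Function.End (W → ZMod 2) :=
  cs.lift ⟨cs.reflRepGen, cs.isLiftable_reflRepGen⟩

/-- Tits' reflection cocycle: the parity of the number of occurrences of `t` in the left inversion
sequence of any word for `w`. -/
noncomputable def reflCocycle (w : W) : W → ZMod 2 := cs.reflRep w 0

theorem reflRep_simple (a : B) : cs.reflRep (s a) = cs.reflRepGen a :=
  cs.lift_apply_simple cs.isLiftable_reflRepGen a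

theorem reflRep_mul_apply (x y : W) (f : W → ZMod 2) :
    cs.reflRep (x * y) f = cs.reflRep x (cs.reflRep y f) := by
  rw [map_mul]
  rfl

theorem reflCocycle_one : cs.reflCocycle 1 = 0 := by
  rw [reflCocycle, map_one]
  rfl

theorem reflRep_apply (w : W) (f : W → ZMod 2) (t : W) :
    cs.reflRep w f t = f (w⁻¹ * t * w) + cs.reflCocycle w t := by
  induction w using cs.simple_induction_left generalizing f t with
  | one =>
    rw [reflCocycle_one, map_one, inv_one, one_mul, mul_one, Pi.zero_apply, add_zero]
    rfl
  | mul_simple_left w a ih =>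
    rw [reflCocycle, reflRep_mul_apply, reflRep_mul_apply, reflRep_simple, reflRepGen, reflRepGen,
      ih, ih, mul_inv_rev, inv_simple, Pi.zero_apply, zero_add, add_assoc]
    simp only [mul_assoc]

theorem reflCocycle_mul (x y t : W) :
    cs.reflCocycle (x * y) t = cs.reflCocycle x t + cs.reflCocycle y (x⁻¹ * t * x) := by
  rw [reflCocycle, reflRep_mul_apply, reflRep_apply, add_comm]
  rfl

theorem reflCocycle_simple (a : B) (t : W) :
    cs.reflCocycle (s a) t = if t = s a then 1 else 0 := by
  rw [reflCocycle, reflRep_simple]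
  exact zero_add _

theorem reflCocycle_self {t : W} (ht : cs.IsReflection t) : cs.reflCocycle t t = 1 := by
  obtain ⟨y, a, rfl⟩ := ht
  have hconj : y⁻¹ * (y * s a * y⁻¹) * y = s a := by group
  have hinv := cs.reflCocycle_mul y y⁻¹ (y * s a * y⁻¹)
  rw [mul_inv_cancel, reflCocycle_one, hconj, Pi.zero_apply] at hinv
  have hsplit := cs.reflCocycle_mul y (s a * y⁻¹) (y * s a * y⁻¹)
  rw [← mul_assoc, hconj, cs.reflCocycle_mul (s a) y⁻¹, reflCocycle_simple, if_pos rfl,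
    inv_simple, simple_mul_simple_self, one_mul] at hsplit
  have char_two : ∀ c d : ZMod 2, 0 = c + d → c + (1 + d) = 1 := by decide
  rw [hsplit, char_two _ _ hinv]

theorem reflCocycle_wordProd_eq_zero {ω : List B} {t : W} (ht : t ∉ cs.leftInvSeq ω) :
    cs.reflCocycle (π ω) t = 0 := by
  induction ω generalizing t with
  | nil => rw [wordProd_nil, reflCocycle_one, Pi.zero_apply]
  | cons a ω ih =>
    simp only [leftInvSeq, List.mem_cons, List.mem_map, not_or, not_exists, not_and] at ht
    rw [wordProd_cons, reflCocycle_mul, reflCocycle_simple, if_neg ht.1, zero_add, inv_simple]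
    apply ih
    intro hmem
    exact ht.2 _ hmem (by simp [mul_assoc])

theorem mem_leftInvSeq_of_isLeftInversion {ω : List B} {t : W}
    (ht : cs.IsLeftInversion (π ω) t) : t ∈ cs.leftInvSeq ω := by
  by_contra hmem
  obtain ⟨ξ, hξ, hξt⟩ := cs.exists_isReduced (t * π ω)
  have hcocycle : cs.reflCocycle (π ξ) t = 1 := by
    rw [← hξt, reflCocycle_mul, reflCocycle_self cs ht.1, ht.1.inv, ht.1.mul_self, one_mul,
      reflCocycle_wordProd_eq_zero cs hmem, add_zero]
  have hmemξ : t ∈ cs.leftInvSeq ξ := by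
    by_contra hnot
    rw [reflCocycle_wordProd_eq_zero cs hnot] at hcocycle
    exact zero_ne_one hcocycle
  have hshorter := (cs.isLeftInversion_of_mem_leftInvSeq hξ hmemξ).2
  rw [← hξt, ← mul_assoc, ht.1.mul_self, one_mul] at hshorter
  exact lt_asymm hshorter ht.2

theorem exists_eraseIdx_of_isLeftDescent {ω : List B} {i : B} (hi : cs.IsLeftDescent (π ω) i) :
    ∃ p < ω.length, s i * π ω = π (ω.eraseIdx p) := by
  obtain ⟨p, hp, hget⟩ := List.mem_iff_getElem.mp <| cs.mem_leftInvSeq_of_isLeftInversion <|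
    (cs.isLeftInversion_simple_iff_isLeftDescent _ i).mpr hi
  refine ⟨p, by simpa using hp, ?_⟩
  rw [← getD_leftInvSeq_mul_wordProd, List.getD_eq_getElem _ _ hp, hget]

end ReflectionCocycle

section ParabolicWords

variable {J : Set B}

def IsShortestWordIn (J : Set B) (ω : List B) : Prop :=
  (∀ b ∈ ω, b ∈ J) ∧
    ∀ ω' : List B, (∀ b ∈ ω', b ∈ J) → π ω' = π ω → ω.length ≤ ω'.length

theorem exists_isShortestWordIn {ω : List B} (hω : ∀ b ∈ ω, b ∈ J) :
    ∃ ρ, cs.IsShortestWordIn J ρ ∧ π ρ = π ω := by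
  classical
  have hex : ∃ n, ∃ ρ : List B, (∀ b ∈ ρ, b ∈ J) ∧ π ρ = π ω ∧ ρ.length = n :=
    ⟨_, ω, hω, rfl, rfl⟩
  obtain ⟨ρ, hρJ, hρω, hρn⟩ := Nat.find_spec hex
  refine ⟨ρ, ⟨hρJ, fun ρ' hρ'J hρ'ρ => ?_⟩, hρω⟩
  rw [hρn]
  exact Nat.find_min' hex ⟨ρ', hρ'J, hρ'ρ.trans hρω, rfl⟩

theorem IsShortestWordIn.tail {c : B} {ω : List B} (h : cs.IsShortestWordIn J (c :: ω)) :
    cs.IsShortestWordIn J ω := by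
  refine ⟨fun b hb => h.1 b (mem_cons_of_mem c hb), fun ω' hω'J hω' => ?_⟩
  have := h.2 (c :: ω') (forall_mem_cons.mpr ⟨h.1 c mem_cons_self, hω'J⟩)
    (by rw [wordProd_cons, wordProd_cons, hω'])
  simpa using this

theorem IsShortestWordIn.isChain_ne {ω : List B} (h : cs.IsShortestWordIn J ω) :
    ω.IsChain (· ≠ ·) := by
  induction ω with
  | nil => exact isChain_nil
  | cons c ω ih =>
    cases ω with
    | nil => exact isChain_singleton c
    | cons c' ω =>
      refine isChain_cons_cons.mpr ⟨?_, ih (IsShortestWordIn.tail cs h)⟩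
      rintro rfl
      have := h.2 ω (fun b hb => h.1 b (by simp [hb]))
        (by rw [wordProd_cons, wordProd_cons, simple_mul_simple_cancel_left])
      simp at this

theorem length_wordProd_mul_of_isShortestWordIn {x : W}
    (hx : ∀ ρ : List B, (∀ b ∈ ρ, b ∈ J) → ℓ x ≤ ℓ (π ρ * x)) {ω : List B}
    (hω : cs.IsShortestWordIn J ω) : ℓ (π ω * x) = ω.length + ℓ x := by
  induction ω with
  | nil => simp
  | cons c ω ih =>
    have ih := ih hω.tail
    obtain ⟨ξ, hξ, rfl⟩ := cs.exists_isReduced x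
    rcases cs.length_simple_mul (π ω * π ξ) c with hup | hdown
    · rw [wordProd_cons, mul_assoc, hup, ih, length_cons]
      omega
    exfalso
    have hdesc : cs.IsLeftDescent (π (ω ++ ξ)) c := by
      rw [IsLeftDescent, wordProd_append]
      omega
    obtain ⟨p, hp, hdel⟩ := cs.exists_eraseIdx_of_isLeftDescent hdesc
    rcases lt_or_ge p ω.length with hpω | hpξ
    · -- the deleted letter lies in `ω`, contradicting its minimality
      rw [eraseIdx_append_of_lt_length hpω, wordProd_append, wordProd_append, ← mul_assoc]
        at hdel
      have := hω.2 (ω.eraseIdx p)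
        (fun b hb => hω.1 b (mem_cons_of_mem c (mem_of_mem_eraseIdx hb)))
        (by rw [wordProd_cons]; exact (mul_right_cancel hdel).symm)
      rw [length_eraseIdx_of_lt hpω, length_cons] at this
      omega
    · -- the deleted letter lies in `ξ`, contradicting the minimality of `x`
      rw [eraseIdx_append_of_length_le hpξ, wordProd_append, wordProd_append] at hdel
      have hq : p - ω.length < ξ.length := by rw [length_append] at hp; omega
      have := hx (ω.reverse ++ c :: ω) (fun b hb => by
        rcases mem_append.mp hb with hb | hb
        · exact hω.1 b (mem_cons_of_mem c (mem_reverse.mp hb))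
        · exact hω.1 b hb)
      rw [wordProd_append, wordProd_reverse, wordProd_cons, mul_assoc, mul_assoc, hdel,
        inv_mul_cancel_left] at this
      have := (this.trans (cs.length_wordProd_le _)).trans_eq (length_eraseIdx_of_lt hq)
      rw [hξ.eq] at this
      omega

theorem exists_shortest_parabolic_coset_rep (J : Set B) (w : W) :
    ∃ ρ₀ : List B, (∀ b ∈ ρ₀, b ∈ J) ∧
      ∀ ρ : List B, (∀ b ∈ ρ, b ∈ J) → ℓ (π ρ₀ * w) ≤ ℓ (π ρ * (π ρ₀ * w)) := by
  classical
  have hex : ∃ n, ∃ ρ : List B, (∀ b ∈ ρ, b ∈ J) ∧ ℓ (π ρ * w) = n :=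
    ⟨_, [], by simp, rfl⟩
  obtain ⟨ρ₀, hρ₀J, hρ₀⟩ := Nat.find_spec hex
  refine ⟨ρ₀, hρ₀J, fun ρ hρ => ?_⟩
  rw [hρ₀, ← mul_assoc, ← wordProd_append]
  exact Nat.find_min' hex ⟨ρ ++ ρ₀, forall_mem_append.mpr ⟨hρ, hρ₀J⟩, rfl⟩

end ParabolicWords

section RightAngled

theorem eq_of_conj_simple_eq_simple (hM : M.IsRightAngled) {w : W} {b c : B}
    (h : w * s b * w⁻¹ = s c) : b = c := by
  classical
  let χ : W →* Multiplicative (ZMod 2) := cs.lift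
    ⟨fun d => Multiplicative.ofAdd (if d = c then 1 else 0),
      hM.isLiftable (fun d => by split_ifs <;> rfl) (fun _ _ _ => mul_comm _ _)⟩
  have hχ : χ (s b) = χ (s c) := by
    rw [← h, map_mul, map_mul, map_inv, mul_comm (χ w), mul_inv_cancel_right]
  rw [lift_apply_simple, lift_apply_simple, if_pos rfl] at hχ
  by_contra hbc
  rw [if_neg hbc] at hχ
  exact zero_ne_one (Multiplicative.ofAdd.injective hχ)

theorem commute_simple_of_ne_zero (hM : M.IsRightAngled) {b c : B} (h : M b c ≠ 0) :
    Commute (s b) (s c) := by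
  rcases eq_or_ne b c with rfl | hbc
  · exact Commute.refl _
  have hpow := cs.simple_mul_simple_pow b c
  rw [(hM b c hbc).resolve_right h, pow_two, mul_eq_one_iff_eq_inv, mul_inv_rev, inv_simple,
    inv_simple] at hpow
  exact hpow

open scoped Classical in
/-- `s i` and `s a` act on `ℤ` as the reflections in `-1/2` and `1/2`, all other generators
trivially. -/
noncomputable def infDihedralGen (i a b : B) : Equiv.Perm ℤ :=
  if b = i then Equiv.subLeft (-1) else if b = a then Equiv.subLeft 1 else 1

theorem infDihedralGen_left (i a : B) : infDihedralGen i a i = Equiv.subLeft (-1) := by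
  rw [infDihedralGen, if_pos rfl]

theorem infDihedralGen_right {i a : B} (hia : i ≠ a) :
    infDihedralGen i a a = Equiv.subLeft 1 := by
  rw [infDihedralGen, if_neg hia.symm, if_pos rfl]

theorem infDihedralGen_of_ne {i a b : B} (hi : b ≠ i) (ha : b ≠ a) :
    infDihedralGen i a b = 1 := by
  rw [infDihedralGen, if_neg hi, if_neg ha]

theorem infDihedralGen_mul_self (i a b : B) :
    infDihedralGen i a b * infDihedralGen i a b = 1 := by
  unfold infDihedralGen
  split_ifs <;> ext <;> simp

theorem infDihedralGen_eq_one_or_eq_one {i a b b' : B} (h0 : M i a = 0) (h2 : M b b' = 2) :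
    infDihedralGen i a b = 1 ∨ infDihedralGen i a b' = 1 := by
  have hM2 : ∀ {c c'}, c = c' ∨ M c c' = 0 → M c c' ≠ 2 := by
    rintro c c' (rfl | h) <;> simp [*]
  by_cases hb : b = i ∨ b = a
  · right
    apply infDihedralGen_of_ne <;> rintro rfl <;> rcases hb with rfl | rfl <;>
      exact hM2 (by simp [h0, M.symmetric b]) h2
  · push Not at hb
    exact Or.inl (infDihedralGen_of_ne hb.1 hb.2)

noncomputable def infDihedralRep (hM : M.IsRightAngled) {i a : B} (h0 : M i a = 0) :
    W →* Equiv.Perm ℤ :=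
  cs.lift ⟨infDihedralGen i a, hM.isLiftable (infDihedralGen_mul_self i a) fun b b' h2 => by
    rcases infDihedralGen_eq_one_or_eq_one h0 h2 with h | h <;> simp [h]⟩

theorem infDihedralRep_simple_mul_apply (hM : M.IsRightAngled) {i a : B} (h0 : M i a = 0)
    (c : B) (w : W) (k : ℤ) :
    cs.infDihedralRep hM h0 (s c * w) k =
      infDihedralGen i a c (cs.infDihedralRep hM h0 w k) := by
  rw [map_mul, Equiv.Perm.mul_apply, infDihedralRep, lift_apply_simple]

theorem abs_infDihedralRep_wordProd_le (hM : M.IsRightAngled) {i a : B} (h0 : M i a = 0)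
    (ω : List B) : |cs.infDihedralRep hM h0 (π ω) 0| ≤ ω.length := by
  induction ω with
  | nil => simp
  | cons c ω ih =>
    rw [wordProd_cons, infDihedralRep_simple_mul_apply, length_cons, Nat.cast_succ]
    set k := cs.infDihedralRep hM h0 (π ω) 0
    have hk : |infDihedralGen i a c k| ≤ |k| + 1 := by
      unfold infDihedralGen
      split_ifs <;> simp only [Equiv.subLeft_apply, Equiv.Perm.one_apply] <;>
        cases abs_cases k <;> cases abs_cases (-1 - k) <;> cases abs_cases (1 - k) <;> linarith
    linarith

open scoped Classical in
theorem infDihedralRep_wordProd_cons (hM : M.IsRightAngled) {i a : B} (h0 : M i a = 0) {c : B}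
    {ω : List B} (hJ : ∀ b ∈ c :: ω, b ∈ ({i, a} : Set B))
    (hω : (c :: ω).IsChain (· ≠ ·)) :
    cs.infDihedralRep hM h0 (π (c :: ω)) 0 =
      if c = i then -((ω.length : ℤ) + 1) else (ω.length : ℤ) + 1 := by
  have hia : i ≠ a := by rintro rfl; simp at h0
  simp only [Set.mem_insert_iff, Set.mem_singleton_iff] at hJ
  induction ω generalizing c with
  | nil =>
    rw [wordProd_cons, infDihedralRep_simple_mul_apply, wordProd_nil, map_one,
      Equiv.Perm.one_apply]
    rcases hJ c mem_cons_self with rfl | rfl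
    · simp [infDihedralGen_left]
    · simp [infDihedralGen_right hia, hia.symm]
  | cons c' ω ih =>
    obtain ⟨hcc', hω'⟩ := isChain_cons_cons.mp hω
    rw [wordProd_cons, infDihedralRep_simple_mul_apply,
      ih hω' (fun b hb => hJ b (mem_cons_of_mem c hb)), length_cons]
    rcases hJ c mem_cons_self with rfl | rfl <;> rcases hJ c' (by simp) with rfl | rfl
    · exact absurd rfl hcc'
    · simp [infDihedralGen_left, hia.symm]; ring
    · simp [infDihedralGen_right hia, hia.symm]; ring
    · exact absurd rfl hcc'

theorem abs_infDihedralRep_wordProd_of_isChain (hM : M.IsRightAngled) {i a : B}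
    (h0 : M i a = 0) {ω : List B} (hJ : ∀ b ∈ ω, b ∈ ({i, a} : Set B))
    (hω : ω.IsChain (· ≠ ·)) : |cs.infDihedralRep hM h0 (π ω) 0| = ω.length := by
  cases ω with
  | nil => simp
  | cons c ω =>
    rw [infDihedralRep_wordProd_cons cs hM h0 hJ hω, length_cons, Nat.cast_succ]
    split_ifs
    · rw [abs_neg, abs_of_nonneg (by positivity)]
    · rw [abs_of_nonneg (by positivity)]

theorem length_le_or_length_le_of_isShortestWordIn (hM : M.IsRightAngled) {i a : B}
    (h0 : M i a = 0) {ρ ρi ρa : List B} (hρ : cs.IsShortestWordIn {i, a} ρ)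
    (hρi : π ρi = s i * π ρ) (hρa : π ρa = s a * π ρ) :
    ρ.length ≤ ρi.length ∨ ρ.length ≤ ρa.length := by
  have hia : i ≠ a := by rintro rfl; simp at h0
  have hv := cs.abs_infDihedralRep_wordProd_of_isChain hM h0 hρ.1 hρ.isChain_ne
  have hvi := cs.abs_infDihedralRep_wordProd_le hM h0 ρi
  have hva := cs.abs_infDihedralRep_wordProd_le hM h0 ρa
  rw [hρi, infDihedralRep_simple_mul_apply, infDihedralGen_left, Equiv.subLeft_apply] at hvi
  rw [hρa, infDihedralRep_simple_mul_apply, infDihedralGen_right hia, Equiv.subLeft_apply] at hva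
  -- `|-1 - k|` and `|1 - k|` cannot both be smaller than `|k|`
  cases abs_cases (cs.infDihedralRep hM h0 (π ρ) 0) <;>
    cases abs_cases (-1 - cs.infDihedralRep hM h0 (π ρ) 0) <;>
    cases abs_cases (1 - cs.infDihedralRep hM h0 (π ρ) 0) <;> omega

theorem not_isLeftDescent_and_isLeftDescent (hM : M.IsRightAngled) {i a : B} (h0 : M i a = 0)
    (w : W) : ¬(cs.IsLeftDescent w i ∧ cs.IsLeftDescent w a) := by
  rintro ⟨hi, ha⟩
  obtain ⟨ρ₀, hρ₀J, hx⟩ := cs.exists_shortest_parabolic_coset_rep {i, a} w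
  have hw : π ρ₀.reverse * (π ρ₀ * w) = w := by rw [wordProd_reverse, inv_mul_cancel_left]
  have hρ₀J' : ∀ b ∈ ρ₀.reverse, b ∈ ({i, a} : Set B) :=
    fun b hb => hρ₀J b (mem_reverse.mp hb)
  obtain ⟨ρ, hρ, hρd⟩ := cs.exists_isShortestWordIn hρ₀J'
  obtain ⟨ρi, hρi, hρid⟩ :=
    cs.exists_isShortestWordIn (ω := i :: ρ₀.reverse) (forall_mem_cons.mpr ⟨by simp, hρ₀J'⟩)
  obtain ⟨ρa, hρa, hρad⟩ :=
    cs.exists_isShortestWordIn (ω := a :: ρ₀.reverse) (forall_mem_cons.mpr ⟨by simp, hρ₀J'⟩)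
  rw [wordProd_cons, ← hρd] at hρid hρad
  have hℓ := cs.length_wordProd_mul_of_isShortestWordIn hx hρ
  have hℓi := cs.length_wordProd_mul_of_isShortestWordIn hx hρi
  have hℓa := cs.length_wordProd_mul_of_isShortestWordIn hx hρa
  rw [hρd, hw] at hℓ
  rw [hρid, mul_assoc, hρd, hw] at hℓi
  rw [hρad, mul_assoc, hρd, hw] at hℓa
  unfold IsLeftDescent at hi ha
  have := cs.length_le_or_length_le_of_isShortestWordIn hM h0 hρ hρid hρad
  omega

theorem exists_isLeftDescent_and_isLeftDescent {w : W} {i c : B} (hcomm : Commute (s i) w)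
    (hc : cs.IsLeftDescent w c) : ∃ u, cs.IsLeftDescent u i ∧ cs.IsLeftDescent u c := by
  by_cases hi : cs.IsLeftDescent w i
  · exact ⟨w, hi, hc⟩
  have hup : ℓ (s i * w) = ℓ w + 1 :=
    (cs.length_simple_mul w i).resolve_right fun h => hi (by unfold IsLeftDescent; omega)
  refine ⟨s i * w, ?_, ?_⟩
  · rw [IsLeftDescent, simple_mul_simple_cancel_left, hup]
    exact Nat.lt_succ_self _
  · have := cs.length_mul_le (s c * w) (s i)
    rw [length_simple] at this
    unfold IsLeftDescent at hc
    rw [IsLeftDescent, hup, hcomm.eq, ← mul_assoc]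
    omega

theorem IsReduced.commute_simple_of_mem (hM : M.IsRightAngled) {ω : List B}
    (hω : cs.IsReduced ω) {i : B} (hcomm : Commute (s i) (π ω)) :
    ∀ k ∈ ω, Commute (s k) (s i) := by
  induction ω with
  | nil => simp
  | cons c ω ih =>
    have hdesc : cs.IsLeftDescent (π (c :: ω)) c := by
      rw [IsLeftDescent, wordProd_cons, simple_mul_simple_cancel_left, ← wordProd_cons, hω.eq,
        length_cons]
      exact (cs.length_wordProd_le ω).trans_lt (Nat.lt_succ_self _)
    have hc : Commute (s c) (s i) := by
      rcases eq_or_ne (M c i) 0 with h0 | h0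
      · obtain ⟨u, hu⟩ := cs.exists_isLeftDescent_and_isLeftDescent hcomm hdesc
        exact absurd ⟨hu.2, hu.1⟩ (cs.not_isLeftDescent_and_isLeftDescent hM h0 u)
      · exact cs.commute_simple_of_ne_zero hM h0
    have hcomm' : Commute (s i) (π ω) := by
      simpa [wordProd_cons] using hc.symm.inv_right.mul_right hcomm
    exact forall_mem_cons.mpr ⟨hc, ih (hω.drop 1) hcomm'⟩

end RightAngled

end CoxeterSystem

theorem right_angled_cancellation_commutes_general
    {B W : Type*} [Group W] (M : CoxeterMatrix B) (cs : CoxeterSystem M W)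
    (rightAngled : ∀ i j : B, i ≠ j → M i j = 2 ∨ M i j = 0)
    (v : W) (i j : B)
    (hconj : v⁻¹ * cs.simple i * v = cs.simple j) :
    cs.simple i = cs.simple j ∧
    ∀ ω : List B, cs.IsReduced ω → cs.wordProd ω = v →
      ∀ k ∈ ω, cs.simple k * cs.simple i = cs.simple i * cs.simple k := by
  obtain rfl : i = j := cs.eq_of_conj_simple_eq_simple rightAngled (by rwa [inv_inv])
  have hcomm : Commute (cs.simple i) v := inv_mul_eq_iff_eq_mul.mp (by rwa [← mul_assoc])
  exact ⟨rfl, fun ω hω hωv =>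
    CoxeterSystem.IsReduced.commute_simple_of_mem cs rightAngled hω (hωv ▸ hcomm)⟩

/-- In a right-angled Coxeter system, if `u * s * v * t * w = u * v * w` arises from a
reduced-expression cancellation, i.e. `v⁻¹ * s * v = t`, then `s = t` and every generator
appearing in any reduced expression of `v` commutes with `s`. -/
theorem right_angled_cancellation_commutes
    {B W : Type*} [Group W] (M : CoxeterMatrix B) (cs : CoxeterSystem M W)
    (rightAngled : ∀ i j : B, i ≠ j → M i j = 2 ∨ M i j = 0)
    (u v w : W) (i j : B)
    (heq : u * cs.simple i * v * cs.simple j * w = u * v * w)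
    (hconj : v⁻¹ * cs.simple i * v = cs.simple j) :
    cs.simple i = cs.simple j ∧
    ∀ ω : List B, cs.IsReduced ω → cs.wordProd ω = v →
      ∀ k ∈ ω, cs.simple k * cs.simple i = cs.simple i * cs.simple k :=
  right_angled_cancellation_commutes_general M cs rightAngled v i j hconj
end

section
/- Let ζ ∈ ℓ²(W) be given by ζ(w) = q^{|w|/2} for a Coxeter group W whose growth series converges at q (i.e. W(q) = ∑_w q^{|w|} < ∞, q ≤ 1). Then for every generator s ∈ S, the right Hecke operator T_s^r satisfies T_s^r ζ = q^{1/2} ζ, where T_s^r acts on ℓ²(W) by T_s^r δ_w = δ_{ws} if |ws| > |w| and T_s^r δ_w = δ_{ws} + ((q−1)/√q) δ_w otherwise. -/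
/-! The vector `ζ` is `w ↦ t ^ ℓ(w)` with `t = √q`, and `q - 1 = t ^ 2 - 1`. Since right
multiplication by a simple reflection changes the length by exactly one, the eigenvalue
equation reduces to the two identities `t ^ (n + 1) = t * t ^ n` (length goes up) and
`t ^ n + ((t ^ 2 - 1) / t) * t ^ (n + 1) = t * t ^ (n + 1)` (length goes down). -/

namespace CoxeterSystem

variable {B W : Type*} [Group W] {M : CoxeterMatrix B} (cs : CoxeterSystem M W)

theorem pow_length_mul_simple_add_ite {K : Type*} [Field K] {t : K} (ht : t ≠ 0)
    (w : W) (s : B) :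
    t ^ cs.length (w * cs.simple s) +
        (if cs.length (w * cs.simple s) < cs.length w
          then (t ^ 2 - 1) / t * t ^ cs.length w else 0) =
      t * t ^ cs.length w := by
  rcases cs.length_mul_simple w s with hup | hdown
  · rw [if_neg (by omega), hup, add_zero, pow_succ, mul_comm]
  · rw [if_pos (by omega), ← hdown]
    field_simp
    ring

end CoxeterSystem

theorem right_hecke_operator_eigenvector_general
    {B W : Type*} [Group W] (M : CoxeterMatrix B) (cs : CoxeterSystem M W)
    (q : ℝ) (hq0 : 0 < q)
    (ζ : W → ℝ) (hζ : ∀ w : W, ζ w = Real.sqrt q ^ cs.length w)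
    (s : B) (w : W) :
    ζ (w * cs.simple s) +
      (if cs.length (w * cs.simple s) < cs.length w
        then ((q - 1) / Real.sqrt q) * ζ w else 0) = Real.sqrt q * ζ w := by
  have hsqrt : Real.sqrt q ≠ 0 := (Real.sqrt_pos.2 hq0).ne'
  rw [hζ, hζ]
  simpa only [Real.sq_sqrt hq0.le] using cs.pow_length_mul_simple_add_ite hsqrt w s

/-- Let `ζ ∈ ℓ²(W)` be given by `ζ(w) = q^{|w|/2}` for a Coxeter group whose growth
series converges at `q` (`∑_w q^{|w|} < ∞`, `0 < q ≤ 1`). Then for every generator `s`,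
the right Hecke operator `T_s^r` (acting by `T_s^r δ_w = δ_{ws}` if `|ws| > |w|` and
`T_s^r δ_w = δ_{ws} + ((q−1)/√q) δ_w` otherwise) satisfies `T_s^r ζ = √q ζ`; pointwise,
`ζ(ws) + (if |ws| < |w| then ((q−1)/√q) ζ(w) else 0) = √q · ζ(w)` for every `w`. -/
theorem right_hecke_operator_eigenvector
    {B W : Type*} [Group W] (M : CoxeterMatrix B) (cs : CoxeterSystem M W)
    (q : ℝ) (hq0 : 0 < q) (hq1 : q ≤ 1)
    (hsum : Summable (fun w : W => q ^ cs.length w))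
    (ζ : W → ℝ) (hζ : ∀ w : W, ζ w = Real.sqrt q ^ cs.length w)
    (s : B) (w : W) :
    ζ (w * cs.simple s) +
      (if cs.length (w * cs.simple s) < cs.length w
        then ((q - 1) / Real.sqrt q) * ζ w else 0) = Real.sqrt q * ζ w :=
  right_hecke_operator_eigenvector_general M cs q hq0 ζ hζ s w
end

section
/- Let W(t) = ∑_{w∈W} t^{|w|} be the spherical growth series of an infinite Coxeter group W, with radius of convergence ρ. Then 0 < ρ ≤ 1, and the series ∑_{w∈W} ρ^{|w|} diverges. -/
/-!
The ball counts `b n = #{w : |w| ≤ n}` of a Coxeter group are submultiplicative, since a reduced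
word of length at most `m + k` splits into words of lengths at most `m` and `k`. Hence
`n ↦ b n * t ^ n` is submultiplicative too, and as soon as one of its terms with `n ≠ 0` drops
below `1` it is dominated by a geometric series. For `0 ≤ t < 1` the growth series at `t`
converges if and only if `∑ b n * t ^ n` does (the latter is the former times `∑ t ^ j`), so
convergence at `t` forces `b n * t ^ n < 1` for some `n ≠ 0`, and by continuity also at some
`t' > t`: the set of convergence is open and cannot contain its supremum. For infinite `W` the
series diverges at every `t ≥ 1`, and `b 1 < ∞` gives convergence near `0`.
-/

open Filter

/-- `Nat.card` is `0` on an infinite ball, so lemmas about `ballCard` assume finite balls. -/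
noncomputable def ballCard {X : Type*} (ℓ : X → ℕ) (n : ℕ) : ℕ := Nat.card {x // ℓ x ≤ n}

section Submultiplicative

variable {u : ℕ → ℝ}

theorem le_pow_mul_of_submultiplicative (hu0 : ∀ k, 0 ≤ u k)
    (hu : ∀ m k, u (m + k) ≤ u m * u k) (n j r : ℕ) : u (j * n + r) ≤ u n ^ j * u r := by
  induction j with
  | zero => simp
  | succ j ih =>
    calc u ((j + 1) * n + r) = u (n + (j * n + r)) := by ring_nf
      _ ≤ u n * u (j * n + r) := hu _ _
      _ ≤ u n * (u n ^ j * u r) := mul_le_mul_of_nonneg_left ih (hu0 n)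
      _ = u n ^ (j + 1) * u r := by ring

theorem summable_of_submultiplicative (hu0 : ∀ k, 0 ≤ u k)
    (hu : ∀ m k, u (m + k) ≤ u m * u k) {n : ℕ} (hn : n ≠ 0) (hlt : u n < 1) : Summable u := by
  have : NeZero n := ⟨hn⟩
  rw [← (Nat.divModEquiv n).symm.summable_iff]
  refine Summable.of_nonneg_of_le (fun _ => hu0 _)
    (fun p => le_pow_mul_of_submultiplicative hu0 hu n p.1 p.2) ?_
  exact (summable_geometric_of_lt_one (hu0 n) hlt).mul_of_nonneg Summable.of_finite
    (fun _ => pow_nonneg (hu0 n) _) (fun _ => hu0 _)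

end Submultiplicative

section LengthFunction

variable {X : Type*} {ℓ : X → ℕ}

theorem not_summable_pow_of_one_le [Infinite X] {t : ℝ} (ht : 1 ≤ t) :
    ¬Summable fun x => t ^ ℓ x := fun h =>
  let ⟨_, hx⟩ := (h.tendsto_cofinite_zero.eventually_lt_const one_pos).exists
  (one_le_pow₀ ht).not_gt hx

variable (hfin : ∀ n, {x | ℓ x ≤ n}.Finite)
include hfin

/-- The fibre of `(x, j) ↦ ℓ x + j` over `n` is a copy of the ball of radius `n`. -/
theorem summable_pow_add_iff {t : ℝ} (ht : 0 ≤ t) :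
    (Summable fun p : X × ℕ => t ^ (ℓ p.1 + p.2)) ↔
      Summable fun n => (ballCard ℓ n : ℝ) * t ^ n := by
  let fibre (n : ℕ) : Set (X × ℕ) := {p | ℓ p.1 + p.2 = n}
  let fibreEquivBall (n : ℕ) : fibre n ≃ {x // ℓ x ≤ n} :=
    { toFun p := ⟨p.1.1, by have : ℓ p.1.1 + p.1.2 = n := p.2; omega⟩
      invFun x := ⟨(x.1, n - ℓ x.1), show ℓ x.1 + (n - ℓ x.1) = n by have := x.2; omega⟩
      left_inv p := by
        have : ℓ p.1.1 + p.1.2 = n := p.2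
        ext <;> simp only; omega
      right_inv _ := rfl }
  have hsum (n : ℕ) : ∑' p : fibre n, t ^ (ℓ p.1.1 + p.1.2) = ballCard ℓ n * t ^ n := by
    rw [tsum_congr fun p : fibre n => congrArg (t ^ ·) p.2, tsum_const,
      Nat.card_congr (fibreEquivBall n), nsmul_eq_mul, ballCard]
  have (n : ℕ) : Finite (fibre n) :=
    have : Finite {x // ℓ x ≤ n} := (hfin n).to_subtype
    Finite.of_equiv _ (fibreEquivBall n).symm
  rw [summable_partition (fun p => pow_nonneg ht _) (s := fibre)
    fun p => ⟨_, rfl, fun _ h => h.symm⟩]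
  simp only [hsum]
  exact ⟨And.right, fun h => ⟨fun _ => Summable.of_finite, h⟩⟩

theorem summable_pow_of_summable_ballCard_mul_pow {t : ℝ} (ht : 0 ≤ t)
    (h : Summable fun n => (ballCard ℓ n : ℝ) * t ^ n) : Summable fun x => t ^ ℓ x := by
  simpa [Function.comp_def] using
    ((summable_pow_add_iff hfin ht).2 h).comp_injective (Prod.mk_left_injective 0)

theorem summable_ballCard_mul_pow_of_summable_pow {t : ℝ} (ht : 0 ≤ t) (ht1 : t < 1)
    (h : Summable fun x => t ^ ℓ x) : Summable fun n => (ballCard ℓ n : ℝ) * t ^ n := by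
  refine (summable_pow_add_iff hfin ht).1 ?_
  simpa only [pow_add] using h.mul_of_nonneg (summable_geometric_of_lt_one ht ht1)
    (fun _ => pow_nonneg ht _) (fun _ => pow_nonneg ht _)

variable (hmul : ∀ m k, ballCard ℓ (m + k) ≤ ballCard ℓ m * ballCard ℓ k)
include hmul

theorem summable_pow_of_ballCard_mul_pow_lt_one {t : ℝ} (ht : 0 ≤ t) {n : ℕ} (hn : n ≠ 0)
    (hlt : ballCard ℓ n * t ^ n < 1) : Summable fun x => t ^ ℓ x := by
  refine summable_pow_of_summable_ballCard_mul_pow hfin ht <|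
    summable_of_submultiplicative (fun _ => by positivity) (fun m k => ?_) hn hlt
  calc (ballCard ℓ (m + k) : ℝ) * t ^ (m + k)
      ≤ (ballCard ℓ m * ballCard ℓ k : ℕ) * (t ^ m * t ^ k) := by
        rw [pow_add]; gcongr; exact hmul m k
    _ = ballCard ℓ m * t ^ m * (ballCard ℓ k * t ^ k) := by push_cast; ring

theorem exists_gt_summable_pow {t : ℝ} (ht : 0 ≤ t) (ht1 : t < 1)
    (h : Summable fun x => t ^ ℓ x) : ∃ t' > t, Summable fun x => t' ^ ℓ x := by
  obtain ⟨n, hlt, hn⟩ : ∃ n, (ballCard ℓ n : ℝ) * t ^ n < 1 ∧ n ≠ 0 :=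
    (((summable_ballCard_mul_pow_of_summable_pow hfin ht ht1 h).tendsto_atTop_zero
      |>.eventually_lt_const one_pos).and (eventually_ne_atTop 0)).exists
  have hcont : Continuous fun s : ℝ => (ballCard ℓ n : ℝ) * s ^ n := by fun_prop
  obtain ⟨t', hlt', ht'⟩ := ((((hcont.tendsto t).eventually_lt_const hlt).filter_mono
    (nhdsWithin_le_nhds (s := Set.Ioi t))).and self_mem_nhdsWithin).exists
  exact ⟨t', ht', summable_pow_of_ballCard_mul_pow_lt_one hfin hmul (ht.trans ht'.le) hn hlt'⟩

end LengthFunction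

namespace CoxeterSystem

variable {B W : Type*} [Group W] {M : CoxeterMatrix B} (cs : CoxeterSystem M W) [Finite B]

theorem finite_setOf_length_le (n : ℕ) : {w : W | cs.length w ≤ n}.Finite := by
  refine ((List.finite_length_le B n).image cs.wordProd).subset fun w hw => ?_
  obtain ⟨ω, hω, rfl⟩ := cs.exists_isReduced w
  exact ⟨ω, hω.eq.ge.trans hw, rfl⟩

theorem ballCard_length_add_le (m k : ℕ) :
    ballCard cs.length (m + k) ≤ ballCard cs.length m * ballCard cs.length k := by
  have : Finite {w // cs.length w ≤ m} := (cs.finite_setOf_length_le m).to_subtype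
  have : Finite {w // cs.length w ≤ k} := (cs.finite_setOf_length_le k).to_subtype
  let mul (p : {w // cs.length w ≤ m} × {w // cs.length w ≤ k}) : {w // cs.length w ≤ m + k} :=
    ⟨p.1 * p.2, (cs.length_mul_le _ _).trans (add_le_add p.1.2 p.2.2)⟩
  rw [ballCard, ballCard, ballCard, ← Nat.card_prod]
  refine Nat.card_le_card_of_surjective mul fun w => ?_
  obtain ⟨ω, hω, hw⟩ := cs.exists_isReduced w.1
  refine ⟨(⟨cs.wordProd (ω.take m), ?_⟩, ⟨cs.wordProd (ω.drop m), ?_⟩), ?_⟩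
  · exact (cs.length_wordProd_le _).trans (List.length_take_le _ _)
  · refine (cs.length_wordProd_le _).trans ?_
    have hw_len := w.2
    rw [List.length_drop, ← hω.eq, ← hw]
    omega
  · ext
    simp only [mul, ← cs.wordProd_append, List.take_append_drop, ← hw]

end CoxeterSystem

/-- Let `ρ` be the radius of convergence of the spherical growth series of an infinite
Coxeter group `W` with finitely many generators, realized as the supremum of the set of
`t ≥ 0` at which `∑_{w ∈ W} t^{|w|}` converges. Then `0 < ρ ≤ 1` and the series
`∑_{w ∈ W} ρ^{|w|}` diverges. -/
theorem growth_series_radius_of_convergence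
    {B W : Type*} [Group W] (M : CoxeterMatrix B) (cs : CoxeterSystem M W)
    [Finite B] [Infinite W]
    (ρ : ℝ) (hρ : ρ = sSup {t : ℝ | 0 ≤ t ∧ Summable (fun w : W => t ^ cs.length w)}) :
    0 < ρ ∧ ρ ≤ 1 ∧ ¬ Summable (fun w : W => ρ ^ cs.length w) := by
  set S := {t : ℝ | 0 ≤ t ∧ Summable (fun w : W => t ^ cs.length w)}
  have hfin := cs.finite_setOf_length_le
  have hmul := cs.ballCard_length_add_le
  have hlt_one (t : ℝ) (ht : t ∈ S) : t < 1 :=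
    lt_of_not_ge fun h => not_summable_pow_of_one_le h ht.2
  have hbdd : BddAbove S := ⟨1, fun t ht => (hlt_one t ht).le⟩
  set t₀ : ℝ := (ballCard cs.length 1 + 1)⁻¹
  have ht₀ : 0 < t₀ := by positivity
  have ht₀S : t₀ ∈ S := by
    refine ⟨ht₀.le, summable_pow_of_ballCard_mul_pow_lt_one hfin hmul ht₀.le one_ne_zero ?_⟩
    rw [pow_one, ← div_eq_mul_inv, div_lt_one (by positivity)]
    exact lt_add_one _
  have hρ0 : 0 < ρ := hρ ▸ ht₀.trans_le (le_csSup hbdd ht₀S)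
  refine ⟨hρ0, hρ ▸ csSup_le ⟨t₀, ht₀S⟩ fun t ht => (hlt_one t ht).le, fun hsum => ?_⟩
  obtain ⟨t, hρt, ht⟩ :=
    exists_gt_summable_pow hfin hmul hρ0.le (hlt_one ρ ⟨hρ0.le, hsum⟩) hsum
  exact (hρ ▸ le_csSup hbdd ⟨hρ0.le.trans hρt.le, ht⟩).not_gt hρt
end
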